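/- arXiv:2405.03090 — 7 statements merged into one kernel-verified Lean document; each statement's English description precedes it below -/
import Mathlib

section
/- Let λ₁,λ₂,λ₃ be pairwise distinct positive reals, {N₁,N₂,N₃} an orthonormal basis of ℝ³ with self-dyads M_a := N_a N_aᵀ, and E : (0,∞) → ℝ differentiable with E'(λ) > 0 for all λ > 0. Let 𝕼 be the projection operator associated with (λ_a; N_a; E), and let 𝕼⁻¹ be the linear map defined by the same formula with the coefficients E'(λ_a)/λ_a and 2(E(λ_a)−E(λ_b))/(λ_a²−λ_b²) replaced by λ_a/E'(λ_a) and (λ_a²−λ_b²)/(2(E(λ_a)−E(λ_b))) respectively (all denominators are nonzero since E is strictly increasing). Then for every real symmetric 3×3 matrix A one has 𝕼(𝕼⁻¹(A)) = A and 𝕼⁻¹(𝕼(A)) = A; in particular 𝕼 restricts to a linear automorphism of the space of real symmetric 3×3 matrices. -/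
open Matrix Finset

/-- The projection operator of Hill's framework associated with principal values `a`,
principal directions `V`, a scale function `f` and its derivative `f'`. -/
noncomputable def projOp (a : Fin 3 → ℝ) (V : Fin 3 → Fin 3 → ℝ) (f f' : ℝ → ℝ)
    (A : Matrix (Fin 3) (Fin 3) ℝ) : Matrix (Fin 3) (Fin 3) ℝ :=
  (∑ i, ((f' (a i) / a i) * (V i ⬝ᵥ A *ᵥ V i)) • vecMulVec (V i) (V i)) +
    ∑ i, ∑ j ∈ univ.filter (fun j => i < j),
      ((2 * (f (a i) - f (a j)) / ((a i) ^ 2 - (a j) ^ 2)) * (V i ⬝ᵥ A *ᵥ V j)) •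
        (vecMulVec (V i) (V j) + vecMulVec (V j) (V i))

/-- The candidate inverse of the projection operator, with reciprocal coefficients. -/
noncomputable def projOpInv (a : Fin 3 → ℝ) (V : Fin 3 → Fin 3 → ℝ) (f f' : ℝ → ℝ)
    (A : Matrix (Fin 3) (Fin 3) ℝ) : Matrix (Fin 3) (Fin 3) ℝ :=
  (∑ i, ((a i / f' (a i)) * (V i ⬝ᵥ A *ᵥ V i)) • vecMulVec (V i) (V i)) +
    ∑ i, ∑ j ∈ univ.filter (fun j => i < j),
      ((((a i) ^ 2 - (a j) ^ 2) / (2 * (f (a i) - f (a j)))) * (V i ⬝ᵥ A *ᵥ V j)) •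
        (vecMulVec (V i) (V j) + vecMulVec (V j) (V i))

/-- Auxiliary: an expression of "diagonal + off-diagonal dyad sums" shape equals
`Pᵀ * D * P` where `P` has rows `N i` and `D` carries the scalar coefficients. -/
private lemma projOp_key (N : Fin 3 → Fin 3 → ℝ) (d : Fin 3 → ℝ) (c : Fin 3 → Fin 3 → ℝ)
    (hc : ∀ i j, c i j = c j i) :
    ((∑ i, d i • vecMulVec (N i) (N i)) +
      ∑ i, ∑ j ∈ univ.filter (fun j => i < j),
        c i j • (vecMulVec (N i) (N j) + vecMulVec (N j) (N i)))
    = (Matrix.of N)ᵀ * (Matrix.of fun i j => if i = j then d i else c i j) * Matrix.of N := by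
  have hf0 : (univ.filter (fun j => (0:Fin 3) < j)) = {1, 2} := by decide
  have hf1 : (univ.filter (fun j => (1:Fin 3) < j)) = {2} := by decide
  have hf2 : (univ.filter (fun j => (2:Fin 3) < j)) = (∅ : Finset (Fin 3)) := by decide
  ext a b
  simp only [Matrix.add_apply, Matrix.sum_apply, Matrix.smul_apply, vecMulVec_apply,
    Fin.sum_univ_three, hf0, hf1, hf2, Finset.sum_insert (by decide : (1:Fin 3) ∉ ({2} : Finset (Fin 3))),
    Finset.sum_singleton, Finset.sum_empty, Matrix.mul_apply, Matrix.transpose_apply,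
    Matrix.of_apply, smul_eq_mul]
  norm_num [Fin.sum_univ_three]
  rw [if_neg (by decide : ¬(2:Fin 3) = 0), if_neg (by decide : ¬(2:Fin 3) = 1),
    if_neg (by decide : ¬(0:Fin 3) = 2), if_neg (by decide : ¬(1:Fin 3) = 2)]
  simp only [hc 1 0, hc 2 0, hc 2 1]
  ring

/-- For pairwise distinct positive principal stretches, an orthonormal
basis of principal directions, and a differentiable strictly increasing scale function,
the projection operator `𝕼` and the operator `𝕼⁻¹` with reciprocal coefficients are
mutually inverse on symmetric matrices; in particular `𝕼` restricts to a linear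
automorphism of the space of real symmetric `3 × 3` matrices. -/
theorem projOp_inverse (lam : Fin 3 → ℝ) (N : Fin 3 → Fin 3 → ℝ) (E E' : ℝ → ℝ)
    (hpos : ∀ i, 0 < lam i)
    (hdist : ∀ i j, i ≠ j → lam i ≠ lam j)
    (hON : ∀ i j, N i ⬝ᵥ N j = if i = j then (1 : ℝ) else 0)
    (hE : ∀ x : ℝ, 0 < x → HasDerivAt E (E' x) x)
    (hE' : ∀ x : ℝ, 0 < x → 0 < E' x) :
    ∀ A : Matrix (Fin 3) (Fin 3) ℝ, A.IsSymm →
      projOp lam N E E' (projOpInv lam N E E' A) = A ∧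
      projOpInv lam N E E' (projOp lam N E E' A) = A := by
  -- basic nonvanishing facts
  have hlam0 : ∀ i, lam i ≠ 0 := fun i => (hpos i).ne'
  have hE'0 : ∀ i, E' (lam i) ≠ 0 := fun i => (hE' _ (hpos i)).ne'
  have hmono : StrictMonoOn E (Set.Ioi 0) := by
    apply strictMonoOn_of_deriv_pos (convex_Ioi 0)
    · intro x hx; exact (hE x hx).continuousAt.continuousWithinAt
    · intro x hx
      rw [interior_Ioi] at hx
      rw [(hE x hx).deriv]; exact hE' x hx
  have hEne : ∀ i j, i ≠ j → E (lam i) - E (lam j) ≠ 0 := by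
    intro i j hij
    refine sub_ne_zero.mpr (fun h => hdist i j hij ?_)
    exact hmono.injOn (hpos i) (hpos j) h
  have hsqne : ∀ i j, i ≠ j → lam i ^ 2 - lam j ^ 2 ≠ 0 := by
    intro i j hij
    have : lam i ^ 2 - lam j ^ 2 = (lam i - lam j) * (lam i + lam j) := by ring
    rw [this]
    exact mul_ne_zero (sub_ne_zero.mpr (hdist i j hij))
      (by have := hpos i; have := hpos j; linarith)
  -- the coefficient matrices
  set m : Fin 3 → Fin 3 → ℝ := fun i j =>
    if i = j then E' (lam i) / lam i
    else 2 * (E (lam i) - E (lam j)) / ((lam i) ^ 2 - (lam j) ^ 2) with hm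
  set mi : Fin 3 → Fin 3 → ℝ := fun i j =>
    if i = j then lam i / E' (lam i)
    else ((lam i) ^ 2 - (lam j) ^ 2) / (2 * (E (lam i) - E (lam j))) with hmi
  have hinv : ∀ i j, m i j * mi i j = 1 := by
    intro i j
    by_cases h : i = j
    · simp only [hm, hmi, h, if_pos rfl]
      rw [div_mul_div_comm, mul_comm (lam j)]
      exact div_self (mul_ne_zero (hE'0 j) (hlam0 j))
    · simp only [hm, hmi, if_neg h]
      rw [div_mul_div_comm, mul_comm ((lam i)^2 - (lam j)^2)]
      exact div_self (mul_ne_zero (mul_ne_zero two_ne_zero (hEne i j h)) (hsqne i j h))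
  have hmsym : ∀ i j, m i j = m j i := by
    intro i j
    by_cases h : i = j
    · subst h; rfl
    · simp only [hm, if_neg h, if_neg (Ne.symm h)]
      rw [show 2 * (E (lam j) - E (lam i)) = -(2 * (E (lam i) - E (lam j))) by ring,
        show lam j ^ 2 - lam i ^ 2 = -(lam i ^ 2 - lam j ^ 2) by ring, neg_div_neg_eq]
  have hmisym : ∀ i j, mi i j = mi j i := by
    intro i j
    by_cases h : i = j
    · subst h; rfl
    · simp only [hmi, if_neg h, if_neg (Ne.symm h)]
      rw [show lam j ^ 2 - lam i ^ 2 = -(lam i ^ 2 - lam j ^ 2) by ring,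
        show 2 * (E (lam j) - E (lam i)) = -(2 * (E (lam i) - E (lam j))) by ring, neg_div_neg_eq]
  -- the matrix of principal directions
  set P : Matrix (Fin 3) (Fin 3) ℝ := Matrix.of N with hP
  have hPPt : P * Pᵀ = 1 := by
    ext i j
    simpa [hP, Matrix.mul_apply, dotProduct, Matrix.one_apply] using hON i j
  have hPtP : Pᵀ * P = 1 := mul_eq_one_comm.mp hPPt
  have hdotmat : ∀ (B : Matrix (Fin 3) (Fin 3) ℝ) (i j : Fin 3),
      N i ⬝ᵥ B *ᵥ N j = (P * B * Pᵀ) i j := by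
    intro B i j
    simp only [hP, Matrix.mul_apply, dotProduct, mulVec, Matrix.transpose_apply,
      Matrix.of_apply, Fin.sum_univ_three]
    ring
  have hsandwich : ∀ D : Matrix (Fin 3) (Fin 3) ℝ, P * (Pᵀ * D * P) * Pᵀ = D := by
    intro D
    rw [← Matrix.mul_assoc, ← Matrix.mul_assoc, hPPt, one_mul, Matrix.mul_assoc, hPPt,
      Matrix.mul_one]
  -- symmetry of dot products against symmetric matrices
  have hdotsym : ∀ (B : Matrix (Fin 3) (Fin 3) ℝ), (∀ i j, B i j = B j i) →
      ∀ i j, N i ⬝ᵥ B *ᵥ N j = N j ⬝ᵥ B *ᵥ N i := by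
    intro B hB i j
    simp only [dotProduct, mulVec, Fin.sum_univ_three]
    rw [hB 1 0, hB 2 0, hB 2 1]
    ring
  -- structural form of the two operators on symmetric matrices
  have hQform : ∀ B : Matrix (Fin 3) (Fin 3) ℝ, (∀ i j, B i j = B j i) →
      projOp lam N E E' B = Pᵀ * (Matrix.of fun i j => m i j * (N i ⬝ᵥ B *ᵥ N j)) * P := by
    intro B hB
    have hc : ∀ i j,
        (2 * (E (lam i) - E (lam j)) / ((lam i) ^ 2 - (lam j) ^ 2)) * (N i ⬝ᵥ B *ᵥ N j)
          = (2 * (E (lam j) - E (lam i)) / ((lam j) ^ 2 - (lam i) ^ 2)) * (N j ⬝ᵥ B *ᵥ N i) := by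
      intro i j
      rw [hdotsym B hB i j,
        show 2 * (E (lam j) - E (lam i)) = -(2 * (E (lam i) - E (lam j))) by ring,
        show lam j ^ 2 - lam i ^ 2 = -(lam i ^ 2 - lam j ^ 2) by ring, neg_div_neg_eq]
    have := projOp_key N (fun i => (E' (lam i) / lam i) * (N i ⬝ᵥ B *ᵥ N i))
      (fun i j => (2 * (E (lam i) - E (lam j)) / ((lam i) ^ 2 - (lam j) ^ 2)) * (N i ⬝ᵥ B *ᵥ N j))
      hc
    rw [projOp, this, ← hP]
    congr 1
    congr 1
    ext i j
    by_cases h : i = j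
    · subst h; simp [hm]
    · simp [hm, h]
  have hQinvform : ∀ B : Matrix (Fin 3) (Fin 3) ℝ, (∀ i j, B i j = B j i) →
      projOpInv lam N E E' B = Pᵀ * (Matrix.of fun i j => mi i j * (N i ⬝ᵥ B *ᵥ N j)) * P := by
    intro B hB
    have hc : ∀ i j,
        (((lam i) ^ 2 - (lam j) ^ 2) / (2 * (E (lam i) - E (lam j)))) * (N i ⬝ᵥ B *ᵥ N j)
          = (((lam j) ^ 2 - (lam i) ^ 2) / (2 * (E (lam j) - E (lam i)))) * (N j ⬝ᵥ B *ᵥ N i) := by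
      intro i j
      rw [hdotsym B hB i j,
        show lam j ^ 2 - lam i ^ 2 = -(lam i ^ 2 - lam j ^ 2) by ring,
        show 2 * (E (lam j) - E (lam i)) = -(2 * (E (lam i) - E (lam j))) by ring, neg_div_neg_eq]
    have := projOp_key N (fun i => (lam i / E' (lam i)) * (N i ⬝ᵥ B *ᵥ N i))
      (fun i j => (((lam i) ^ 2 - (lam j) ^ 2) / (2 * (E (lam i) - E (lam j)))) * (N i ⬝ᵥ B *ᵥ N j))
      hc
    rw [projOpInv, this, ← hP]
    congr 1
    congr 1
    ext i j
    by_cases h : i = j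
    · subst h; simp [hmi]
    · simp [hmi, h]
  intro A hA
  have hAsym : ∀ i j, A i j = A j i := fun i j => (hA.apply j i)
  -- entry-symmetry of Pᵀ * D * P for entry-symmetric D
  have hconjsym : ∀ D : Matrix (Fin 3) (Fin 3) ℝ, (∀ i j, D i j = D j i) →
      ∀ i j, (Pᵀ * D * P) i j = (Pᵀ * D * P) j i := by
    intro D hD i j
    simp only [Matrix.mul_apply, Matrix.transpose_apply, Fin.sum_univ_three]
    rw [hD 1 0, hD 2 0, hD 2 1]
    ring
  -- the two compositions
  have hcomp : ∀ (g h : Fin 3 → Fin 3 → ℝ), (∀ i j, g i j * h i j = 1) →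
      Pᵀ * (Matrix.of fun i j =>
        g i j * (N i ⬝ᵥ (Pᵀ * (Matrix.of fun i j => h i j * (N i ⬝ᵥ A *ᵥ N j)) * P) *ᵥ N j)) * P
        = A := by
    intro g h hgh
    have hmid : (Matrix.of fun i j =>
        g i j * (N i ⬝ᵥ (Pᵀ * (Matrix.of fun i j => h i j * (N i ⬝ᵥ A *ᵥ N j)) * P) *ᵥ N j))
        = P * A * Pᵀ := by
      ext i j
      rw [Matrix.of_apply, hdotmat, hsandwich]
      rw [Matrix.of_apply, hdotmat, ← mul_assoc, hgh, one_mul]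
    rw [hmid, ← Matrix.mul_assoc, ← Matrix.mul_assoc, hPtP, one_mul, Matrix.mul_assoc, hPtP,
      Matrix.mul_one]
  constructor
  · -- projOp (projOpInv A) = A
    have h1 := hQinvform A hAsym
    have hBsym : ∀ i j, (projOpInv lam N E E' A) i j = (projOpInv lam N E E' A) j i := by
      rw [h1]
      apply hconjsym
      intro i j
      simp only [Matrix.of_apply]
      rw [hmisym i j, hdotsym A hAsym i j]
    rw [hQform _ hBsym, h1]
    exact hcomp m mi hinv
  · -- projOpInv (projOp A) = A
    have h1 := hQform A hAsym
    have hBsym : ∀ i j, (projOp lam N E E' A) i j = (projOp lam N E E' A) j i := by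
      rw [h1]
      apply hconjsym
      intro i j
      simp only [Matrix.of_apply]
      rw [hmsym i j, hdotsym A hAsym i j]
    rw [hQinvform _ hBsym, h1]
    have hinv' : ∀ i j, mi i j * m i j = 1 := fun i j => by rw [mul_comm]; exact hinv i j
    exact hcomp mi m hinv'
end

section
/- Let Γ be a real symmetric positive-definite 3×3 matrix with spectral decomposition Γ = Σ_a Γ_a² N̄_a N̄_aᵀ, where {N̄_a} is an orthonormal basis of ℝ³ and the Γ_a > 0 are pairwise distinct, and let E^v : (0,∞) → ℝ be differentiable with (E^v)' > 0 everywhere; let 𝕼^v be the projection operator associated with (Γ_a; N̄_a; E^v). Let C be a real symmetric positive-definite 3×3 matrix with spectral decomposition C = Σ_a λ_a² N_a N_aᵀ, with {N_a} orthonormal and the λ_a > 0 pairwise distinct, let E : (0,∞) → ℝ be differentiable with E' > 0 everywhere, and let 𝕼 be the projection operator associated with (λ_a; N_a; E). If a real symmetric 3×3 matrix T satisfies 𝕼^v(T) = 0 (the equilibrium condition Q = O), then T = 0, and consequently the non-equilibrium stress S^neq := 𝕼(T) vanishes: S^neq = O. -/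
/-!
In the orthonormal frame `V` the projection operator acts diagonally on symmetric matrices: it
multiplies the component `V k ⬝ᵥ T *ᵥ V l` by `projOpCoeff a f f' k l`. Positivity of the `a i`
and of `f'`, distinctness of the `a i` and strict monotonicity of `f` make all these factors
nonzero, so `𝕼ᵛ(T) = 0` forces every component of `T`, hence `T` itself, to vanish.
-/

open Matrix Finset

lemma strictMonoOn_Ioi_of_hasDerivAt_pos {f f' : ℝ → ℝ}
    (hf : ∀ x, 0 < x → HasDerivAt f (f' x) x) (hf' : ∀ x, 0 < x → 0 < f' x) :
    StrictMonoOn f (Set.Ioi 0) :=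
  strictMonoOn_of_hasDerivWithinAt_pos (convex_Ioi 0)
    (fun x hx => (hf x hx).continuousAt.continuousWithinAt)
    (fun x hx => (hf x (by simpa using hx)).hasDerivWithinAt)
    (fun x hx => hf' x (by simpa using hx))

namespace Matrix

variable {n : Type*} [Fintype n]

lemma dotProduct_vecMulVec_mulVec (x u v y : n → ℝ) :
    x ⬝ᵥ vecMulVec u v *ᵥ y = (x ⬝ᵥ u) * (v ⬝ᵥ y) := by
  rw [vecMulVec_mulVec, op_smul_eq_smul, dotProduct_smul, smul_eq_mul, mul_comm]

lemma IsSymm.dotProduct_mulVec_comm {T : Matrix n n ℝ} (hT : T.IsSymm) (x y : n → ℝ) :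
    x ⬝ᵥ T *ᵥ y = y ⬝ᵥ T *ᵥ x := by
  rw [dotProduct_mulVec, ← mulVec_transpose, hT.eq, dotProduct_comm]

lemma eq_zero_of_forall_dotProduct_mulVec_eq_zero [DecidableEq n] {V : n → n → ℝ}
    (hV : ∀ i j, V i ⬝ᵥ V j = if i = j then 1 else 0) {A : Matrix n n ℝ}
    (hA : ∀ k l, V k ⬝ᵥ A *ᵥ V l = 0) : A = 0 := by
  set P : Matrix n n ℝ := of V
  have hPPt : P * Pᵀ = 1 := by
    ext i j
    simpa [P, mul_apply, one_apply, dotProduct] using hV i j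
  have hPAPt : P * A * Pᵀ = 0 := by
    ext k l
    rw [mul_mul_apply, transpose_transpose, zero_apply]
    exact hA k l
  calc A = (Pᵀ * P) * A * (Pᵀ * P) := by simp [mul_eq_one_comm.mp hPPt]
    _ = Pᵀ * (P * A * Pᵀ) * P := by simp only [Matrix.mul_assoc]
    _ = 0 := by simp [hPAPt]

end Matrix

section projOpCoeff

variable {ι : Type*} [DecidableEq ι] {a : ι → ℝ} {f f' : ℝ → ℝ}

noncomputable def projOpCoeff (a : ι → ℝ) (f f' : ℝ → ℝ) (k l : ι) : ℝ :=
  if k = l then f' (a k) / a k else 2 * (f (a k) - f (a l)) / (a k ^ 2 - a l ^ 2)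

lemma projOpCoeff_ne_zero (hpos : ∀ i, 0 < a i) (hdist : ∀ i j, i ≠ j → a i ≠ a j)
    (hf : Set.InjOn f (Set.Ioi 0)) (hf' : ∀ x, 0 < x → 0 < f' x) (k l : ι) :
    projOpCoeff a f f' k l ≠ 0 := by
  unfold projOpCoeff
  split_ifs with hkl
  · exact (div_pos (hf' _ (hpos k)) (hpos k)).ne'
  · have hfa : f (a k) ≠ f (a l) := fun h => hdist k l hkl (hf (hpos k) (hpos l) h)
    have hsq : a k ^ 2 ≠ a l ^ 2 := fun h =>
      hdist k l hkl ((pow_left_inj₀ (hpos k).le (hpos l).le two_ne_zero).mp h)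
    exact div_ne_zero (mul_ne_zero two_ne_zero (sub_ne_zero.mpr hfa)) (sub_ne_zero.mpr hsq)

end projOpCoeff

section projOp

variable {a : Fin 3 → ℝ} {V : Fin 3 → Fin 3 → ℝ} {f f' : ℝ → ℝ} {T : Matrix (Fin 3) (Fin 3) ℝ}

lemma dotProduct_projOp_mulVec (hV : ∀ i j, V i ⬝ᵥ V j = if i = j then 1 else 0)
    (hT : T.IsSymm) (k l : Fin 3) :
    V k ⬝ᵥ projOp a V f f' T *ᵥ V l = projOpCoeff a f f' k l * (V k ⬝ᵥ T *ᵥ V l) := by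
  simp only [projOp, add_mulVec, sum_mulVec, smul_mulVec, dotProduct_add, dotProduct_sum,
    dotProduct_smul, smul_eq_mul, dotProduct_vecMulVec_mulVec, hV]
  fin_cases k <;> fin_cases l <;>
    simp only [Fin.sum_univ_three, sum_filter, Fin.isValue, Fin.zero_eta, Fin.mk_one,
      Fin.reduceFinMk, Fin.reduceEq, Fin.reduceLT, Fin.lt_one_iff, not_lt_zero, lt_self_iff_false,
      mem_univ, ↓reduceIte, one_ne_zero, zero_ne_one, mul_ite, mul_one, mul_zero, ite_self,
      add_zero, zero_add, sum_ite_eq', sum_const_zero, Nat.reduceAdd, projOpCoeff] <;>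
    -- the cases `l < k` remain: there `projOp` used the component and coefficient at `(l, k)`
    rw [hT.dotProduct_mulVec_comm (V _), ← neg_div_neg_eq] <;> ring

lemma eq_zero_of_projOp_eq_zero (hV : ∀ i j, V i ⬝ᵥ V j = if i = j then 1 else 0)
    (hpos : ∀ i, 0 < a i) (hdist : ∀ i j, i ≠ j → a i ≠ a j)
    (hf : Set.InjOn f (Set.Ioi 0)) (hf' : ∀ x, 0 < x → 0 < f' x) (hT : T.IsSymm)
    (h : projOp a V f f' T = 0) : T = 0 :=
  eq_zero_of_forall_dotProduct_mulVec_eq_zero hV fun k l => by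
    have hkl := dotProduct_projOp_mulVec (a := a) (f := f) (f' := f') hV hT k l
    rw [h, zero_mulVec, dotProduct_zero, eq_comm] at hkl
    exact (mul_eq_zero.mp hkl).resolve_left (projOpCoeff_ne_zero hpos hdist hf hf' k l)

end projOp

@[simp]
lemma projOp_zero (a : Fin 3 → ℝ) (V : Fin 3 → Fin 3 → ℝ) (f f' : ℝ → ℝ) :
    projOp a V f f' 0 = 0 := by
  simp [projOp]

theorem nonequilibrium_stress_vanishes_general
    (Ga : Fin 3 → ℝ) (Nbar : Fin 3 → Fin 3 → ℝ)
    (hGpos : ∀ i, 0 < Ga i) (hGdist : ∀ i j, i ≠ j → Ga i ≠ Ga j)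
    (hGON : ∀ i j, Nbar i ⬝ᵥ Nbar j = if i = j then (1 : ℝ) else 0)
    (Ev Ev' : ℝ → ℝ)
    (hEv : ∀ x : ℝ, 0 < x → HasDerivAt Ev (Ev' x) x)
    (hEv' : ∀ x : ℝ, 0 < x → 0 < Ev' x)
    (lam : Fin 3 → ℝ) (N : Fin 3 → Fin 3 → ℝ)
    (E E' : ℝ → ℝ)
    (T : Matrix (Fin 3) (Fin 3) ℝ) (hT : T.IsSymm)
    (heq : projOp Ga Nbar Ev Ev' T = 0) :
    T = 0 ∧ projOp lam N E E' T = 0 := by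
  have hEv_inj : Set.InjOn Ev (Set.Ioi 0) := (strictMonoOn_Ioi_of_hasDerivAt_pos hEv hEv').injOn
  obtain rfl := eq_zero_of_projOp_eq_zero hGON hGpos hGdist hEv_inj hEv' hT heq
  exact ⟨rfl, projOp_zero lam N E E'⟩

/-- If the stress-like tensor `T` satisfies the equilibrium condition
`𝕼ᵛ(T) = O`, where `𝕼ᵛ` is the projection operator built from the spectral data of the
internal state variable `Γ`, then `T = O`; consequently the non-equilibrium stress
`Sⁿᵉᑫ = 𝕼(T)` (with `𝕼` built from the spectral data of `C`) vanishes. -/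
theorem nonequilibrium_stress_vanishes
    (Γ : Matrix (Fin 3) (Fin 3) ℝ) (Ga : Fin 3 → ℝ) (Nbar : Fin 3 → Fin 3 → ℝ)
    (hΓ : Γ = ∑ i, ((Ga i) ^ 2) • vecMulVec (Nbar i) (Nbar i))
    (hGpos : ∀ i, 0 < Ga i) (hGdist : ∀ i j, i ≠ j → Ga i ≠ Ga j)
    (hGON : ∀ i j, Nbar i ⬝ᵥ Nbar j = if i = j then (1 : ℝ) else 0)
    (Ev Ev' : ℝ → ℝ)
    (hEv : ∀ x : ℝ, 0 < x → HasDerivAt Ev (Ev' x) x)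
    (hEv' : ∀ x : ℝ, 0 < x → 0 < Ev' x)
    (C : Matrix (Fin 3) (Fin 3) ℝ) (lam : Fin 3 → ℝ) (N : Fin 3 → Fin 3 → ℝ)
    (hC : C = ∑ i, ((lam i) ^ 2) • vecMulVec (N i) (N i))
    (hpos : ∀ i, 0 < lam i) (hdist : ∀ i j, i ≠ j → lam i ≠ lam j)
    (hON : ∀ i j, N i ⬝ᵥ N j = if i = j then (1 : ℝ) else 0)
    (E E' : ℝ → ℝ)
    (hE : ∀ x : ℝ, 0 < x → HasDerivAt E (E' x) x)
    (hE' : ∀ x : ℝ, 0 < x → 0 < E' x)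
    (T : Matrix (Fin 3) (Fin 3) ℝ) (hT : T.IsSymm)
    (heq : projOp Ga Nbar Ev Ev' T = 0) :
    T = 0 ∧ projOp lam N E E' T = 0 :=
  nonequilibrium_stress_vanishes_general Ga Nbar hGpos hGdist hGON Ev Ev' hEv hEv' lam N E E' T hT
    heq
end

section
/- Let C be a real symmetric positive-definite 3×3 matrix, J := √(det C), and let the unimodular tensor C̃ := (det C)^{-1/3} C have spectral decomposition C̃ = Σ_a λ̃_a² N_a N_aᵀ with {N_a} orthonormal and the λ̃_a > 0 pairwise distinct. Let Γ be a real symmetric positive-definite 3×3 matrix with spectral decomposition Γ = Σ_a Γ_a² N̄_a N̄_aᵀ, {N̄_a} orthonormal and the Γ_a > 0 pairwise distinct. Let E and E^v be differentiable functions (0,∞) → ℝ with everywhere positive derivative, set Ẽ := Σ_a E(λ̃_a) N_a N_aᵀ and E^v := Σ_a E^v(Γ_a) N̄_a N̄_aᵀ, and for μ > 0 set T̃ := 2μ(Ẽ − E^v). Let 𝕼̃ be the projection operator associated with (λ̃_a; N_a; E) and 𝕼^v the projection operator associated with (Γ_a; N̄_a; E^v). If Q := 𝕼^v(T̃) = 0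 (the equilibrium condition), then T̃ = 0, the fictitious stress S̃^neq := 𝕼̃(T̃) vanishes, and the isochoric non-equilibrium stress S^neq_iso := J^{-2/3}[S̃^neq − (1/3) tr(C S̃^neq) C⁻¹] vanishes: S^neq_iso = O. -/
open Matrix Finset

lemma mySumMulVec {ι : Type*} (s : Finset ι) (f : ι → Matrix (Fin 3) (Fin 3) ℝ)
    (v : Fin 3 → ℝ) : (∑ i ∈ s, f i) *ᵥ v = ∑ i ∈ s, f i *ᵥ v := by
  ext j
  simp only [mulVec, dotProduct, Matrix.sum_apply, Finset.sum_apply, Finset.sum_mul]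
  rw [Finset.sum_comm]

lemma myDotSum {ι : Type*} (s : Finset ι) (u : Fin 3 → ℝ) (g : ι → Fin 3 → ℝ) :
    u ⬝ᵥ (∑ i ∈ s, g i) = ∑ i ∈ s, u ⬝ᵥ g i := by
  simp only [dotProduct, Finset.sum_apply, Finset.mul_sum]
  rw [Finset.sum_comm]

lemma myDotVMV (u x y v : Fin 3 → ℝ) :
    u ⬝ᵥ (vecMulVec x y *ᵥ v) = (u ⬝ᵥ x) * (y ⬝ᵥ v) := by
  simp only [dotProduct, mulVec, vecMulVec_apply, Finset.mul_sum, Finset.sum_mul]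
  rw [Finset.sum_comm]
  exact Finset.sum_congr rfl fun _ _ => Finset.sum_congr rfl fun _ _ => by ring

lemma projOp_contract (a : Fin 3 → ℝ) (V : Fin 3 → Fin 3 → ℝ) (f f' : ℝ → ℝ)
    (hON : ∀ i j, V i ⬝ᵥ V j = if i = j then (1:ℝ) else 0)
    (A : Matrix (Fin 3) (Fin 3) ℝ) (k l : Fin 3) (hkl : k ≤ l) :
    V k ⬝ᵥ (projOp a V f f' A) *ᵥ V l =
      if k = l then (f' (a k) / a k) * (V k ⬝ᵥ A *ᵥ V k)
      else (2 * (f (a k) - f (a l)) / ((a k) ^ 2 - (a l) ^ 2)) * (V k ⬝ᵥ A *ᵥ V l) := by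
  rw [projOp, Matrix.add_mulVec, dotProduct_add]
  simp only [mySumMulVec, myDotSum, Matrix.smul_mulVec, dotProduct_smul,
    Matrix.add_mulVec, dotProduct_add, myDotVMV, hON, smul_eq_mul]
  simp only [Finset.sum_filter, Fin.sum_univ_three]
  fin_cases k <;> fin_cases l <;>
    first
      | exact absurd hkl (by decide)
      | (simp (config := { decide := true }) <;> ring)

lemma myEntry (V : Fin 3 → Fin 3 → ℝ) (M : Matrix (Fin 3) (Fin 3) ℝ) (k l : Fin 3) :
    (Matrix.of V * M * (Matrix.of V)ᵀ) k l = V k ⬝ᵥ M *ᵥ V l := by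
  simp only [Matrix.mul_apply, Matrix.transpose_apply, Matrix.of_apply, mulVec, dotProduct,
    Finset.sum_mul, Finset.mul_sum]
  rw [Finset.sum_comm]
  exact Finset.sum_congr rfl fun _ _ => Finset.sum_congr rfl fun _ _ => by ring

lemma mySymmDot (M : Matrix (Fin 3) (Fin 3) ℝ) (hM : Mᵀ = M) (u v : Fin 3 → ℝ) :
    u ⬝ᵥ M *ᵥ v = v ⬝ᵥ M *ᵥ u := by
  rw [Matrix.dotProduct_mulVec, ← Matrix.mulVec_transpose, hM, dotProduct_comm]

theorem main
    (Ga : Fin 3 → ℝ) (Nbar : Fin 3 → Fin 3 → ℝ)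
    (hGpos : ∀ i, 0 < Ga i) (hGdist : ∀ i j, i ≠ j → Ga i ≠ Ga j)
    (hGON : ∀ i j, Nbar i ⬝ᵥ Nbar j = if i = j then (1 : ℝ) else 0)
    (Ev Ev' : ℝ → ℝ)
    (hEv : ∀ x : ℝ, 0 < x → HasDerivAt Ev (Ev' x) x)
    (hEv' : ∀ x : ℝ, 0 < x → 0 < Ev' x)
    (T : Matrix (Fin 3) (Fin 3) ℝ) (hTsym : Tᵀ = T)
    (hQ : projOp Ga Nbar Ev Ev' T = 0) : T = 0 := by
  have hEvmono : StrictMonoOn Ev (Set.Ioi 0) := by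
    apply strictMonoOn_of_deriv_pos (convex_Ioi 0)
    · exact fun x hx => (hEv x hx).differentiableAt.continuousAt.continuousWithinAt
    · intro x hx
      rw [interior_Ioi] at hx
      rw [(hEv x hx).deriv]
      exact hEv' x hx
  have ht : ∀ k l, Nbar k ⬝ᵥ T *ᵥ Nbar l = 0 := by
    have key : ∀ k l, k ≤ l → Nbar k ⬝ᵥ T *ᵥ Nbar l = 0 := by
      intro k l hkl
      have h0 : Nbar k ⬝ᵥ (projOp Ga Nbar Ev Ev' T) *ᵥ Nbar l = 0 := by
        rw [hQ]; simp
      rw [projOp_contract Ga Nbar Ev Ev' hGON T k l hkl] at h0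
      by_cases hkl' : k = l
      · subst hkl'
        simp only [if_pos rfl] at h0
        have hc : Ev' (Ga k) / Ga k ≠ 0 :=
          ne_of_gt (div_pos (hEv' _ (hGpos k)) (hGpos k))
        exact (mul_eq_zero.mp h0).resolve_left hc
      · rw [if_neg hkl'] at h0
        have hne := hGdist k l hkl'
        have hnum : 2 * (Ev (Ga k) - Ev (Ga l)) ≠ 0 := by
          have : Ev (Ga k) ≠ Ev (Ga l) := fun h =>
            hne (hEvmono.injOn (Set.mem_Ioi.mpr (hGpos k)) (Set.mem_Ioi.mpr (hGpos l)) h)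
          intro h
          apply this
          have := mul_eq_zero.mp h
          rcases this with h2 | h2
          · norm_num at h2
          · linarith [sub_eq_zero.mp h2]
        have hden : Ga k ^ 2 - Ga l ^ 2 ≠ 0 := by
          rcases lt_or_gt_of_ne hne with h | h
          · have := pow_lt_pow_left₀ h (hGpos k).le (two_ne_zero)
            intro hc; nlinarith
          · have := pow_lt_pow_left₀ h (hGpos l).le (two_ne_zero)
            intro hc; nlinarith
        exact (mul_eq_zero.mp h0).resolve_left (div_ne_zero hnum hden)
    intro k l
    rcases le_total k l with h | h
    · exact key k l h
    · rw [mySymmDot T hTsym]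
      exact key l k h
  set P : Matrix (Fin 3) (Fin 3) ℝ := Matrix.of Nbar with hP
  have hPPt : P * Pᵀ = 1 := by
    ext i j
    have := hGON i j
    simpa [Matrix.mul_apply, Matrix.transpose_apply, dotProduct, Matrix.one_apply, hP] using this
  have hPtP : Pᵀ * P = 1 := mul_eq_one_comm.mp hPPt
  have hmid : P * T * Pᵀ = 0 := by
    ext k l
    rw [hP, myEntry, ht]
    simp
  calc T = (Pᵀ * P) * T * (Pᵀ * P) := by rw [hPtP]; simp
    _ = Pᵀ * (P * T * Pᵀ) * P := by simp only [Matrix.mul_assoc]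
    _ = 0 := by rw [hmid]; simp

/-- In the Gibbs-free-energy based theory, if the internal force
`Q = 𝕼ᵛ(T̃)` vanishes (the equilibrium condition), then the stress `T̃ = 2μ(Ẽ − Eᵛ)`
vanishes, the fictitious stress `S̃ⁿᵉᑫ = 𝕼̃(T̃)` vanishes, and the isochoric
non-equilibrium stress `Sⁿᵉᑫ_iso = J^{-2/3}[S̃ⁿᵉᑫ − (1/3) tr(C S̃ⁿᵉᑫ) C⁻¹]` vanishes. -/
theorem isochoric_nonequilibrium_stress_vanishes
    (C : Matrix (Fin 3) (Fin 3) ℝ) (hC : C.PosDef)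
    (J : ℝ) (hJ : J = Real.sqrt C.det)
    (lam : Fin 3 → ℝ) (N : Fin 3 → Fin 3 → ℝ)
    (hCt : (C.det ^ (-(1 : ℝ) / 3)) • C = ∑ i, ((lam i) ^ 2) • vecMulVec (N i) (N i))
    (hpos : ∀ i, 0 < lam i) (hdist : ∀ i j, i ≠ j → lam i ≠ lam j)
    (hON : ∀ i j, N i ⬝ᵥ N j = if i = j then (1 : ℝ) else 0)
    (Γ : Matrix (Fin 3) (Fin 3) ℝ) (Ga : Fin 3 → ℝ) (Nbar : Fin 3 → Fin 3 → ℝ)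
    (hΓ : Γ = ∑ i, ((Ga i) ^ 2) • vecMulVec (Nbar i) (Nbar i))
    (hGpos : ∀ i, 0 < Ga i) (hGdist : ∀ i j, i ≠ j → Ga i ≠ Ga j)
    (hGON : ∀ i j, Nbar i ⬝ᵥ Nbar j = if i = j then (1 : ℝ) else 0)
    (E E' Ev Ev' : ℝ → ℝ)
    (hE : ∀ x : ℝ, 0 < x → HasDerivAt E (E' x) x)
    (hE' : ∀ x : ℝ, 0 < x → 0 < E' x)
    (hEv : ∀ x : ℝ, 0 < x → HasDerivAt Ev (Ev' x) x)
    (hEv' : ∀ x : ℝ, 0 < x → 0 < Ev' x)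
    (μ : ℝ) (hμ : 0 < μ)
    (T : Matrix (Fin 3) (Fin 3) ℝ)
    (hTdef : T = (2 * μ) •
      ((∑ i, E (lam i) • vecMulVec (N i) (N i)) - ∑ i, Ev (Ga i) • vecMulVec (Nbar i) (Nbar i)))
    (hQ : projOp Ga Nbar Ev Ev' T = 0) :
    T = 0 ∧ projOp lam N E E' T = 0 ∧
      (J ^ (-(2 : ℝ) / 3)) •
        (projOp lam N E E' T -
          ((1 / 3 : ℝ) * (C * projOp lam N E E' T).trace) • C⁻¹) = 0 := by
  have hTsym : Tᵀ = T := by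
    ext i j
    simp only [hTdef, Matrix.transpose_apply, Matrix.smul_apply, Matrix.sub_apply,
      Matrix.sum_apply, vecMulVec_apply, smul_eq_mul]
    have h1 : ∀ (v : Fin 3 → Fin 3 → ℝ) (c : Fin 3 → ℝ),
        ∑ x, c x * (v x j * v x i) = ∑ x, c x * (v x i * v x j) :=
      fun v c => Finset.sum_congr rfl fun _ _ => by ring
    rw [h1, h1]
  have hT0 : T = 0 := main Ga Nbar hGpos hGdist hGON Ev Ev' hEv hEv' T hTsym hQ
  have hproj : projOp lam N E E' T = 0 := by
    rw [hT0]
    unfold projOp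
    simp
  refine ⟨hT0, hproj, ?_⟩
  rw [hproj]
  simp
end

section
/- Let C be a real symmetric positive-definite 3×3 matrix, J := √(det C), and let C̃ := (det C)^{-1/3} C have spectral decomposition C̃ = Σ_a λ̃_a² N_a N_aᵀ with {N_a} orthonormal and the λ̃_a > 0 pairwise distinct. Let M ≥ 1, and for each α = 1,…,M let Γ^α be symmetric positive definite with spectral decomposition Γ^α = Σ_a (Γ^α_a)² N̄^α_a (N̄^α_a)ᵀ, {N̄^α_a} orthonormal and the Γ^α_a > 0 pairwise distinct; let E^α, E^{v,α} : (0,∞) → ℝ be differentiable with everywhere positive derivative, set Ẽ^α := Σ_a E^α(λ̃_a) N_a N_aᵀ, E^{v,α} := Σ_a E^{v,α}(Γ^α_a) N̄^α_a (N̄^α_a)ᵀ, T̃^α := 2μ^α(Ẽ^α − E^{v,α}) with μ^α > 0, and let 𝕼̃^α and 𝕼^{v,α} be the projection operators associated with (λ̃_a; N_a; E^α) and with (Γ^α_a; N̄^α_a; E^{v,α}) respectively. If Q^α := 𝕼^{v,α}(T̃^α) = 0 for every α, then S̃^neq := Σ_α 𝕼̃^α(T̃^α) = O, and hence the isochoric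 non-equilibrium stress S^neq_iso := J^{-2/3}[S̃^neq − (1/3) tr(C S̃^neq) C⁻¹] vanishes: S^neq_iso = O. -/
open Matrix Finset

lemma strictMonoAux (f f' : ℝ → ℝ) (hf : ∀ x : ℝ, 0 < x → HasDerivAt f (f' x) x)
    (hf' : ∀ x : ℝ, 0 < x → 0 < f' x) : StrictMonoOn f (Set.Ioi 0) := by
  apply strictMonoOn_of_deriv_pos (convex_Ioi 0)
  · exact fun x hx => ((hf x hx).differentiableAt).continuousAt.continuousWithinAt
  · intro x hx
    rw [interior_Ioi] at hx
    rw [(hf x hx).deriv]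
    exact hf' x hx

lemma vmv_mulVec (u v w : Fin 3 → ℝ) : vecMulVec u v *ᵥ w = (v ⬝ᵥ w) • u := by
  ext x
  simp only [vecMulVec_apply, mulVec, dotProduct, Pi.smul_apply, smul_eq_mul, Finset.mul_sum]
  rw [Finset.sum_mul]
  exact Finset.sum_congr rfl (fun y _ => by ring)

lemma sum_mulVec' {ι : Type*} (s : Finset ι) (M : ι → Matrix (Fin 3) (Fin 3) ℝ)
    (v : Fin 3 → ℝ) : (∑ i ∈ s, M i) *ᵥ v = ∑ i ∈ s, (M i) *ᵥ v := by
  ext x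
  simp only [mulVec, dotProduct, Finset.sum_apply, Matrix.sum_apply, Finset.sum_mul]
  rw [Finset.sum_comm]

lemma dot_sum' {ι : Type*} (s : Finset ι) (u : Fin 3 → ℝ) (f : ι → Fin 3 → ℝ) :
    u ⬝ᵥ (∑ i ∈ s, f i) = ∑ i ∈ s, u ⬝ᵥ f i := by
  simp only [dotProduct, Finset.sum_apply, Finset.mul_sum]
  rw [Finset.sum_comm]

lemma key (a : Fin 3 → ℝ) (V : Fin 3 → Fin 3 → ℝ) (f f' : ℝ → ℝ)
    (hpos : ∀ i, 0 < a i) (hdist : ∀ i j, i ≠ j → a i ≠ a j)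
    (hON : ∀ i j, V i ⬝ᵥ V j = if i = j then (1 : ℝ) else 0)
    (hf : ∀ x : ℝ, 0 < x → HasDerivAt f (f' x) x)
    (hf' : ∀ x : ℝ, 0 < x → 0 < f' x)
    (A : Matrix (Fin 3) (Fin 3) ℝ) (hA : Aᵀ = A)
    (h0 : projOp a V f f' A = 0) : A = 0 := by
  have hmono := strictMonoAux f f' hf hf'
  have hc : ∀ i, f' (a i) / a i ≠ 0 := fun i =>
    div_ne_zero (ne_of_gt (hf' _ (hpos i))) (ne_of_gt (hpos i))
  have hnum : ∀ i j, i ≠ j → f (a i) - f (a j) ≠ 0 := by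
    intro i j hij
    exact sub_ne_zero.mpr (fun h => hdist i j hij (hmono.injOn (hpos i) (hpos j) h))
  have hden : ∀ i j, i ≠ j → (a i) ^ 2 - (a j) ^ 2 ≠ 0 := by
    intro i j hij h
    have hfac : (a i - a j) * (a i + a j) = 0 := by linear_combination h
    rcases mul_eq_zero.mp hfac with h1 | h1
    · exact hdist i j hij (by linarith)
    · have := hpos i; have := hpos j; linarith
  have hdot : ∀ k l i j, V k ⬝ᵥ (vecMulVec (V i) (V j)) *ᵥ V l
      = (if k = i then (1:ℝ) else 0) * (if j = l then (1:ℝ) else 0) := by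
    intro k l i j
    rw [vmv_mulVec, dotProduct_smul, hON k i, hON j l, smul_eq_mul, mul_comm]
  set g : Fin 3 → Fin 3 → ℝ := fun i j => V i ⬝ᵥ A *ᵥ V j with hg
  have hgsymm : ∀ i j, g j i = g i j := by
    intro i j
    simp only [hg]
    conv_lhs => rw [← hA]
    rw [dotProduct_mulVec, vecMul_transpose, dotProduct_comm]
  have hE : ∀ k l,
      (∑ i, (f' (a i) / a i * g i i) * ((if k = i then (1:ℝ) else 0) * (if i = l then (1:ℝ) else 0))) +
      ∑ i, ∑ j ∈ univ.filter (fun j => i < j),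
        (2 * (f (a i) - f (a j)) / ((a i) ^ 2 - (a j) ^ 2) * g i j) *
          (((if k = i then (1:ℝ) else 0) * (if j = l then (1:ℝ) else 0)) +
           ((if k = j then (1:ℝ) else 0) * (if i = l then (1:ℝ) else 0))) = 0 := by
    intro k l
    have h1 : V k ⬝ᵥ (projOp a V f f' A) *ᵥ V l = 0 := by rw [h0]; simp
    rw [projOp, add_mulVec, dotProduct_add, sum_mulVec', dot_sum',
      sum_mulVec', dot_sum'] at h1
    convert h1 using 2
    · apply Finset.sum_congr rfl; intro i _
      rw [smul_mulVec, dotProduct_smul, hdot]; rfl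
    · apply Finset.sum_congr rfl; intro i _
      rw [sum_mulVec', dot_sum']
      apply Finset.sum_congr rfl; intro j _
      rw [smul_mulVec, dotProduct_smul, add_mulVec, dotProduct_add, hdot, hdot]; rfl
  have hgz : ∀ k l, g k l = 0 := by
    have h00 := hE 0 0
    have h11 := hE 1 1
    have h22 := hE 2 2
    have h01 := hE 0 1
    have h02 := hE 0 2
    have h12 := hE 1 2
    simp only [Finset.sum_filter, Fin.sum_univ_three] at h00 h11 h22 h01 h02 h12
    norm_num [Fin.ext_iff] at h00 h11 h22 h01 h02 h12
    have g00 : g 0 0 = 0 := by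
      rcases h00 with (h | h) | h
      exacts [absurd h (ne_of_gt (hf' _ (hpos 0))), absurd h (ne_of_gt (hpos 0)), h]
    have g11 : g 1 1 = 0 := by
      rcases h11 with (h | h) | h
      exacts [absurd h (ne_of_gt (hf' _ (hpos 1))), absurd h (ne_of_gt (hpos 1)), h]
    have g22 : g 2 2 = 0 := by
      rcases h22 with (h | h) | h
      exacts [absurd h (ne_of_gt (hf' _ (hpos 2))), absurd h (ne_of_gt (hpos 2)), h]
    have g01 : g 0 1 = 0 := by
      rcases h01 with (h | h) | h
      exacts [absurd h (hnum 0 1 (by decide)), absurd h (hden 0 1 (by decide)), h]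
    have g02 : g 0 2 = 0 := by
      rcases h02 (by decide) with (h | h) | h
      exacts [absurd h (hnum 0 2 (by decide)), absurd h (hden 0 2 (by decide)), h]
    have g12 : g 1 2 = 0 := by
      rcases h12 (by decide) with (h | h) | h
      exacts [absurd h (hnum 1 2 (by decide)), absurd h (hden 1 2 (by decide)), h]
    intro k l
    fin_cases k <;> fin_cases l <;>
      first
      | exact g00 | exact g11 | exact g22 | exact g01 | exact g02 | exact g12
      | (rw [hgsymm]; first | exact g01 | exact g02 | exact g12)
  -- now conclude A = 0
  set P : Matrix (Fin 3) (Fin 3) ℝ := Matrix.of V with hP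
  have hPPt : P * Pᵀ = 1 := by
    ext i j
    simpa [hP, Matrix.mul_apply, Matrix.one_apply, dotProduct] using hON i j
  have hPtP : Pᵀ * P = 1 := mul_eq_one_comm.mp hPPt
  have hPAP : P * A * Pᵀ = 0 := by
    ext k l
    have : (P * A * Pᵀ) k l = g k l := by
      simp only [hP, hg, Matrix.mul_apply, Matrix.transpose_apply, Matrix.of_apply,
        dotProduct, mulVec, Finset.sum_mul, Finset.mul_sum]
      rw [Finset.sum_comm]
      exact Finset.sum_congr rfl (fun x _ => Finset.sum_congr rfl (fun y _ => by ring))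
    rw [this, hgz]; rfl
  calc A = (Pᵀ * P) * A * (Pᵀ * P) := by rw [hPtP]; simp
    _ = Pᵀ * (P * A * Pᵀ) * P := by noncomm_ring
    _ = 0 := by rw [hPAP]; simp

/-- The generalized Gibbs-based model with `M ≥ 1` relaxation processes:
if `Q^α = 𝕼^{v,α}(T̃^α) = O` for every `α`, then the total fictitious non-equilibrium
stress `S̃ⁿᵉᑫ = Σ_α 𝕼̃^α(T̃^α)` vanishes, and hence the isochoric non-equilibrium stress
`Sⁿᵉᑫ_iso = J^{-2/3}[S̃ⁿᵉᑫ − (1/3) tr(C S̃ⁿᵉᑫ) C⁻¹]` vanishes. -/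
theorem isochoric_nonequilibrium_stress_vanishes_multi
    (C : Matrix (Fin 3) (Fin 3) ℝ) (hC : C.PosDef)
    (J : ℝ) (hJ : J = Real.sqrt C.det)
    (lam : Fin 3 → ℝ) (N : Fin 3 → Fin 3 → ℝ)
    (hCt : (C.det ^ (-(1 : ℝ) / 3)) • C = ∑ i, ((lam i) ^ 2) • vecMulVec (N i) (N i))
    (hpos : ∀ i, 0 < lam i) (hdist : ∀ i j, i ≠ j → lam i ≠ lam j)
    (hON : ∀ i j, N i ⬝ᵥ N j = if i = j then (1 : ℝ) else 0)
    (M : ℕ) (hM : 1 ≤ M)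
    (Γ : Fin M → Matrix (Fin 3) (Fin 3) ℝ)
    (Ga : Fin M → Fin 3 → ℝ) (Nbar : Fin M → Fin 3 → Fin 3 → ℝ)
    (hΓ : ∀ α, Γ α = ∑ i, ((Ga α i) ^ 2) • vecMulVec (Nbar α i) (Nbar α i))
    (hGpos : ∀ α i, 0 < Ga α i) (hGdist : ∀ α, ∀ i j, i ≠ j → Ga α i ≠ Ga α j)
    (hGON : ∀ α, ∀ i j, Nbar α i ⬝ᵥ Nbar α j = if i = j then (1 : ℝ) else 0)
    (E E' Ev Ev' : Fin M → ℝ → ℝ)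
    (hE : ∀ α, ∀ x : ℝ, 0 < x → HasDerivAt (E α) (E' α x) x)
    (hE' : ∀ α, ∀ x : ℝ, 0 < x → 0 < E' α x)
    (hEv : ∀ α, ∀ x : ℝ, 0 < x → HasDerivAt (Ev α) (Ev' α x) x)
    (hEv' : ∀ α, ∀ x : ℝ, 0 < x → 0 < Ev' α x)
    (μ : Fin M → ℝ) (hμ : ∀ α, 0 < μ α)
    (T : Fin M → Matrix (Fin 3) (Fin 3) ℝ)
    (hTdef : ∀ α, T α = (2 * μ α) •
      ((∑ i, E α (lam i) • vecMulVec (N i) (N i)) -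
        ∑ i, Ev α (Ga α i) • vecMulVec (Nbar α i) (Nbar α i)))
    (hQ : ∀ α, projOp (Ga α) (Nbar α) (Ev α) (Ev' α) (T α) = 0) :
    (∑ α, projOp lam N (E α) (E' α) (T α)) = 0 ∧
      (J ^ (-(2 : ℝ) / 3)) •
        ((∑ α, projOp lam N (E α) (E' α) (T α)) -
          ((1 / 3 : ℝ) * (C * ∑ α, projOp lam N (E α) (E' α) (T α)).trace) • C⁻¹) = 0 := by
  have hT0 : ∀ α, T α = 0 := by
    intro α
    have hsymm : (T α)ᵀ = T α := by
      rw [hTdef α]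
      simp only [Matrix.transpose_smul, Matrix.transpose_sub, Matrix.transpose_sum]
      congr 1
      congr 1 <;>
      · apply Finset.sum_congr rfl
        intro i _
        ext x y
        simp [vecMulVec_apply, mul_comm]
    exact key (Ga α) (Nbar α) (Ev α) (Ev' α) (hGpos α) (hGdist α) (hGON α)
      (hEv α) (hEv' α) (T α) hsymm (hQ α)
  have hproj0 : ∀ α, projOp lam N (E α) (E' α) (T α) = 0 := by
    intro α
    rw [hT0 α, projOp]
    simp
  have hsum : (∑ α, projOp lam N (E α) (E' α) (T α)) = 0 := by
    simp [hproj0]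
  refine ⟨hsum, ?_⟩
  rw [hsum]
  simp
end

section
/- Let F be an invertible real 3×3 matrix and C a real symmetric 3×3 matrix. Interpreting the internal state variable as Γ := Fᵀ F, set Ê := ½(F^{-T} C F^{-1} − I) (the elastic Green–Lagrange strain of the multiplicative theory) and E := ½(C − Γ) (the Green–Lagrange strain difference of the additive theory). Then the basic invariants coincide: tr(Êᵏ) = tr((E Γ^{-1})ᵏ) for k = 1, 2, 3. -/
open Matrix

/-- Interpreting the internal state variable as `Γ := Fᵀ F`, the basic
invariants of the elastic Green–Lagrange strain `Ê := ½(F⁻ᵀ C F⁻¹ − I)` of the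
multiplicative theory and of `E Γ⁻¹` with `E := ½(C − Γ)` of the additive theory
coincide: `tr(Êᵏ) = tr((E Γ⁻¹)ᵏ)` for `k = 1, 2, 3`. -/
theorem basic_invariants_coincide (F C : Matrix (Fin 3) (Fin 3) ℝ)
    (hF : IsUnit F.det) (hC : C.IsSymm) :
    ∀ k : ℕ, (k = 1 ∨ k = 2 ∨ k = 3) →
      ((((1 / 2 : ℝ) • (Fᵀ⁻¹ * C * F⁻¹ - 1)) ^ k).trace =
        ((((1 / 2 : ℝ) • (C - Fᵀ * F)) * (Fᵀ * F)⁻¹) ^ k).trace) := by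
  have hFT : IsUnit Fᵀ.det := by rwa [Matrix.det_transpose]
  have h1 : Fᵀ⁻¹ * Fᵀ = 1 := Matrix.nonsing_inv_mul _ hFT
  have h2 : F * F⁻¹ = 1 := Matrix.mul_nonsing_inv _ hF
  set A := ((1 / 2 : ℝ) • (Fᵀ⁻¹ * C * F⁻¹ - 1))
  set B := (((1 / 2 : ℝ) • (C - Fᵀ * F)) * (Fᵀ * F)⁻¹)
  have key : A = Fᵀ⁻¹ * B * Fᵀ := by
    simp only [A, B]
    rw [Matrix.mul_inv_rev]
    simp only [Matrix.mul_smul, Matrix.smul_mul]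
    congr 1
    rw [sub_mul, Matrix.mul_sub, Matrix.sub_mul]
    congr 1
    · symm
      calc Fᵀ⁻¹ * (C * (F⁻¹ * Fᵀ⁻¹)) * Fᵀ
          = Fᵀ⁻¹ * C * F⁻¹ * (Fᵀ⁻¹ * Fᵀ) := by noncomm_ring
        _ = Fᵀ⁻¹ * C * F⁻¹ := by rw [h1, Matrix.mul_one]
    · symm
      calc Fᵀ⁻¹ * (Fᵀ * F * (F⁻¹ * Fᵀ⁻¹)) * Fᵀ
          = (Fᵀ⁻¹ * Fᵀ) * (F * F⁻¹) * (Fᵀ⁻¹ * Fᵀ) := by noncomm_ring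
        _ = 1 := by rw [h1, h2]; simp
  have conj : ∀ k : ℕ, A ^ k = Fᵀ⁻¹ * B ^ k * Fᵀ := by
    intro k
    induction k with
    | zero => simp [Matrix.nonsing_inv_mul _ hFT]
    | succ n ih =>
      rw [pow_succ, pow_succ, ih, key]
      calc Fᵀ⁻¹ * B ^ n * Fᵀ * (Fᵀ⁻¹ * B * Fᵀ)
          = Fᵀ⁻¹ * B ^ n * (Fᵀ * Fᵀ⁻¹) * B * Fᵀ := by noncomm_ring
        _ = Fᵀ⁻¹ * (B ^ n * B) * Fᵀ := by
            rw [Matrix.mul_nonsing_inv _ hFT]; noncomm_ring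
  intro k _
  rw [conj k, Matrix.trace_mul_cycle, Matrix.mul_nonsing_inv _ hFT, Matrix.one_mul]
end

section
/- Let C : ℝ → (real symmetric 3×3 matrices), λ_a : ℝ → (0,∞) and N_a : ℝ → ℝ³ (a = 1,2,3) be differentiable at t₀, with C(t) N_a(t) = λ_a(t)² N_a(t), ⟨N_a(t), N_b(t)⟩ = δ_{ab} for all t near t₀, and λ₁(t₀)², λ₂(t₀)², λ₃(t₀)² pairwise distinct. Let E : (0,∞) → ℝ be differentiable. Then, at t₀: (i) (λ_a²)' = ⟨N_a, C' N_a⟩ for each a; and (ii) the generalized strain curve 𝐄(t) := Σ_a E(λ_a(t)) N_a(t) N_a(t)ᵀ satisfies 𝐄' = Σ_a (E'(λ_a)/(2λ_a)) ⟨N_a, C' N_a⟩ N_a N_aᵀ + Σ_{a<b} [(E(λ_a) − E(λ_b))/(λ_a² − λ_b²)] ⟨N_a, C' N_b⟩ (N_a N_bᵀ + N_b N_aᵀ); that is, 𝐄' = ½ 𝕼(C') where 𝕼 is the projection operator of Hill's framework associated with (λ_a; N_a; E). -/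
open Matrix Filter Finset

attribute [local instance] Matrix.frobeniusNormedAddCommGroup Matrix.frobeniusNormedSpace

/-! Differentiating `C N_a = λ_a² N_a` and pairing with `N_b`, the symmetry of `C` gives
`⟨N_b, C' N_a⟩ = (λ_a²)' δ_ab + (λ_a² - λ_b²) ⟨N_b, N_a'⟩`. The diagonal entries are (i); the
off-diagonal ones determine the rotation rates `⟨N_b, N_a'⟩` of the frame, which are antisymmetric
because the frame stays orthonormal. Differentiating `Σ_a E(λ_a) N_a N_aᵀ` and expanding each `N_a'`
in the frame, the rotation terms pair up over `a < b` with coefficient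
`(E(λ_a) - E(λ_b)) ⟨N_b, N_a'⟩ = (E(λ_a) - E(λ_b)) ⟨N_a, C' N_b⟩ / (λ_a² - λ_b²)`, which is (ii). -/

section Bilinear

variable {E F G : Type*} [NormedAddCommGroup E] [NormedSpace ℝ E] [FiniteDimensional ℝ E]
  [NormedAddCommGroup F] [NormedSpace ℝ F] [FiniteDimensional ℝ F]
  [NormedAddCommGroup G] [NormedSpace ℝ G]

theorem LinearMap.hasDerivAt_of_bilinear_of_finiteDimensional (B : E →ₗ[ℝ] F →ₗ[ℝ] G)
    {u : ℝ → E} {v : ℝ → F} {u' : E} {v' : F} {x : ℝ}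
    (hu : HasDerivAt u u' x) (hv : HasDerivAt v v' x) :
    HasDerivAt (fun t => B (u t) (v t)) (B (u x) v' + B u' (v x)) x :=
  (LinearMap.toContinuousLinearMap
    (LinearMap.toContinuousLinearMap.toLinearMap ∘ₗ B)).hasDerivAt_of_bilinear
    (fun _ => hu) (fun _ => hv)

end Bilinear

section MatrixCalculus

variable {m n : Type*} [Fintype m] [Fintype n] {x : ℝ}

theorem HasDerivAt.dotProduct {u v : ℝ → n → ℝ} {u' v' : n → ℝ}
    (hu : HasDerivAt u u' x) (hv : HasDerivAt v v' x) :
    HasDerivAt (fun t => u t ⬝ᵥ v t) (u' ⬝ᵥ v x + u x ⬝ᵥ v') x := by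
  rw [add_comm]
  exact (dotProductBilin ℝ ℝ).hasDerivAt_of_bilinear_of_finiteDimensional hu hv

theorem HasDerivAt.mulVec {A : ℝ → Matrix m n ℝ} {A' : Matrix m n ℝ} {v : ℝ → n → ℝ}
    {v' : n → ℝ} (hA : HasDerivAt A A' x) (hv : HasDerivAt v v' x) :
    HasDerivAt (fun t => A t *ᵥ v t) (A' *ᵥ v x + A x *ᵥ v') x := by
  rw [add_comm]
  exact (mulVecBilin ℝ ℝ).hasDerivAt_of_bilinear_of_finiteDimensional hA hv

theorem HasDerivAt.vecMulVec {u : ℝ → m → ℝ} {v : ℝ → n → ℝ} {u' : m → ℝ} {v' : n → ℝ}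
    (hu : HasDerivAt u u' x) (hv : HasDerivAt v v' x) :
    HasDerivAt (fun t => vecMulVec (u t) (v t)) (vecMulVec u' (v x) + vecMulVec (u x) v') x := by
  rw [add_comm]
  exact (vecMulVecBilin ℝ ℝ).hasDerivAt_of_bilinear_of_finiteDimensional hu hv

theorem dotProduct_deriv_eq_zero_of_eventually_eq_const {u v : ℝ → n → ℝ} {u' v' : n → ℝ}
    {c : ℝ} (hu : HasDerivAt u u' x) (hv : HasDerivAt v v' x)
    (h : ∀ᶠ t in nhds x, u t ⬝ᵥ v t = c) : u' ⬝ᵥ v x + u x ⬝ᵥ v' = 0 :=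
  (hu.dotProduct hv).unique ((hasDerivAt_const x c).congr_of_eventuallyEq h)

theorem mulVec_deriv_eq_of_eventually_mulVec_eq_smul {A : ℝ → Matrix n n ℝ}
    {A' : Matrix n n ℝ} {μ : ℝ → ℝ} {μ' : ℝ} {v : ℝ → n → ℝ} {v' : n → ℝ}
    (hA : HasDerivAt A A' x) (hμ : HasDerivAt μ μ' x) (hv : HasDerivAt v v' x)
    (h : ∀ᶠ t in nhds x, A t *ᵥ v t = μ t • v t) :
    A' *ᵥ v x + A x *ᵥ v' = μ' • v x + μ x • v' := by
  rw [add_comm (μ' • v x)]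
  exact (hA.mulVec hv).unique ((hμ.smul hv).congr_of_eventuallyEq h)

end MatrixCalculus

section Frames

variable {n : Type*} [Fintype n]

theorem sum_dotProduct_smul_eq_self [DecidableEq n] {V : n → n → ℝ}
    (hV : ∀ a b, V a ⬝ᵥ V b = if a = b then 1 else 0) (w : n → ℝ) :
    ∑ b, (V b ⬝ᵥ w) • V b = w := by
  have hVVt : Matrix.of V * (Matrix.of V)ᵀ = 1 := by
    ext a b
    exact hV a b
  calc ∑ b, (V b ⬝ᵥ w) • V b = (w ᵥ* (Matrix.of V)ᵀ) ᵥ* Matrix.of V := by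
        rw [vecMul_transpose, vecMul_eq_sum]; rfl
    _ = w := by rw [vecMul_vecMul, mul_eq_one_comm.mp hVVt, vecMul_one]

theorem sum_sum_eq_sum_diag_add_sum_lt {M : Type*} [AddCommMonoid M] [LinearOrder n]
    (F : n → n → M) :
    ∑ a, ∑ b, F a b = ∑ a, F a a + ∑ a, ∑ b ∈ univ.filter (a < ·), (F a b + F b a) := by
  have hsplit : ∀ a b, F a b = (if a < b then F a b else 0) + (if a = b then F a b else 0) +
      (if b < a then F a b else 0) := by
    intro a b
    rcases lt_trichotomy a b with h | rfl | h
    · simp [h, h.ne, h.not_gt]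
    · simp
    · simp [h, h.ne', h.not_gt]
  simp_rw [sum_add_distrib, sum_filter]
  conv_lhs => enter [2, a, 2, b]; rw [hsplit a b]
  simp only [sum_add_distrib, sum_ite_eq, mem_univ, if_true]
  rw [sum_comm (f := fun a b => if b < a then F a b else 0)]
  abel

theorem sum_smul_vecMulVec_deriv_eq [DecidableEq n] [LinearOrder n] {V V' : n → n → ℝ}
    (hV : ∀ a b, V a ⬝ᵥ V b = if a = b then 1 else 0)
    (hanti : ∀ a b, V' a ⬝ᵥ V b + V a ⬝ᵥ V' b = 0) (e : n → ℝ) :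
    ∑ a, e a • (vecMulVec (V' a) (V a) + vecMulVec (V a) (V' a)) =
      ∑ a, ∑ b ∈ univ.filter (a < ·),
        ((e a - e b) * (V b ⬝ᵥ V' a)) • (vecMulVec (V a) (V b) + vecMulVec (V b) (V a)) := by
  have hexpand : ∀ a, vecMulVec (V' a) (V a) + vecMulVec (V a) (V' a) =
      ∑ b, (V b ⬝ᵥ V' a) • (vecMulVec (V b) (V a) + vecMulVec (V a) (V b)) := by
    intro a
    conv_lhs => rw [← sum_dotProduct_smul_eq_self hV (V' a)]
    simp only [← vecMulVecBilin_apply_apply ℝ ℝ, map_sum, LinearMap.sum_apply, map_smul,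
      LinearMap.smul_apply, smul_add, sum_add_distrib]
  have hdiag : ∀ a, V a ⬝ᵥ V' a = 0 := fun a => by
    linarith [hanti a a, dotProduct_comm (V' a) (V a)]
  simp only [hexpand, smul_sum, smul_smul]
  rw [sum_sum_eq_sum_diag_add_sum_lt]
  simp only [hdiag, mul_zero, zero_smul, sum_const_zero, zero_add]
  refine sum_congr rfl fun a _ => sum_congr rfl fun b _ => ?_
  have hba : V a ⬝ᵥ V' b = -(V b ⬝ᵥ V' a) := by
    linarith [hanti a b, dotProduct_comm (V' a) (V b)]
  rw [hba, add_comm (vecMulVec (V b) (V a)), ← add_smul]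
  congr 1
  ring

theorem hasDerivAt_sum_smul_vecMulVec_of_orthonormal [DecidableEq n] [LinearOrder n]
    {e : n → ℝ → ℝ} {e' : n → ℝ} {V : n → ℝ → n → ℝ} {V' : n → n → ℝ} {x : ℝ}
    (he : ∀ a, HasDerivAt (e a) (e' a) x) (hV : ∀ a, HasDerivAt (V a) (V' a) x)
    (hON : ∀ a b, ∀ᶠ t in nhds x, V a t ⬝ᵥ V b t = if a = b then 1 else 0) :
    HasDerivAt (fun t => ∑ a, e a t • vecMulVec (V a t) (V a t))
      ((∑ a, e' a • vecMulVec (V a x) (V a x)) +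
        ∑ a, ∑ b ∈ univ.filter (a < ·), ((e a x - e b x) * (V b x ⬝ᵥ V' a)) •
          (vecMulVec (V a x) (V b x) + vecMulVec (V b x) (V a x))) x := by
  have hanti : ∀ a b, V' a ⬝ᵥ V b x + V a x ⬝ᵥ V' b = 0 :=
    fun a b => dotProduct_deriv_eq_zero_of_eventually_eq_const (hV a) (hV b) (hON a b)
  refine (HasDerivAt.fun_sum fun a _ => (he a).smul ((hV a).vecMulVec (hV a))).congr_deriv ?_
  rw [sum_add_distrib, add_comm,
    sum_smul_vecMulVec_deriv_eq (fun a b => (hON a b).self_of_nhds) hanti]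

end Frames

section EigenFrame

variable {n : Type*} [Fintype n] {S : ℝ → Matrix n n ℝ} {S' : Matrix n n ℝ} {x : ℝ}

theorem dotProduct_mulVec_eq_of_mulVec_deriv_eq {A A' : Matrix n n ℝ} {v v' w : n → ℝ}
    {μ μ' ν : ℝ} (hA : Aᵀ = A) (hw : A *ᵥ w = ν • w)
    (hderiv : A' *ᵥ v + A *ᵥ v' = μ' • v + μ • v') :
    w ⬝ᵥ A' *ᵥ v = μ' * (w ⬝ᵥ v) + (μ - ν) * (w ⬝ᵥ v') := by
  have hsym : w ⬝ᵥ A *ᵥ v' = ν * (w ⬝ᵥ v') := by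
    rw [dotProduct_mulVec, ← hA, vecMul_transpose, hw, smul_dotProduct, smul_eq_mul]
  have h := congrArg (w ⬝ᵥ ·) hderiv
  simp only [dotProduct_add, dotProduct_smul, smul_eq_mul, hsym] at h
  linarith

theorem eigenvalue_deriv_eq_dotProduct_mulVec {μ : ℝ → ℝ} {μ' : ℝ} {v : ℝ → n → ℝ}
    {v' : n → ℝ} (hSsymm : (S x)ᵀ = S x) (hS : HasDerivAt S S' x) (hμ : HasDerivAt μ μ' x)
    (hv : HasDerivAt v v' x) (heig : ∀ᶠ t in nhds x, S t *ᵥ v t = μ t • v t)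
    (hnorm : v x ⬝ᵥ v x = 1) :
    μ' = v x ⬝ᵥ S' *ᵥ v x := by
  rw [dotProduct_mulVec_eq_of_mulVec_deriv_eq hSsymm heig.self_of_nhds
    (mulVec_deriv_eq_of_eventually_mulVec_eq_smul hS hμ hv heig), hnorm]
  ring

theorem dotProduct_mulVec_deriv_eq_of_orthogonal {μ : ℝ} {ν : ℝ → ℝ} {ν' : ℝ}
    {v w : ℝ → n → ℝ} {v' w' : n → ℝ} (hSsymm : (S x)ᵀ = S x) (hS : HasDerivAt S S' x)
    (hν : HasDerivAt ν ν' x) (hv : HasDerivAt v v' x) (hw : HasDerivAt w w' x)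
    (hveig : S x *ᵥ v x = μ • v x) (hweig : ∀ᶠ t in nhds x, S t *ᵥ w t = ν t • w t)
    (horth : ∀ᶠ t in nhds x, v t ⬝ᵥ w t = 0) :
    v x ⬝ᵥ S' *ᵥ w x = (μ - ν x) * (w x ⬝ᵥ v') := by
  have hanti := dotProduct_deriv_eq_zero_of_eventually_eq_const hv hw horth
  rw [dotProduct_mulVec_eq_of_mulVec_deriv_eq hSsymm hveig
    (mulVec_deriv_eq_of_eventually_mulVec_eq_smul hS hν hw hweig), horth.self_of_nhds,
    eq_neg_of_add_eq_zero_right hanti, dotProduct_comm v']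
  ring

end EigenFrame

theorem half_smul_projOp (a : Fin 3 → ℝ) (V : Fin 3 → Fin 3 → ℝ) (f f' : ℝ → ℝ)
    (A : Matrix (Fin 3) (Fin 3) ℝ) :
    (1 / 2 : ℝ) • projOp a V f f' A =
      (∑ i, ((f' (a i) / (2 * a i)) * (V i ⬝ᵥ A *ᵥ V i)) • vecMulVec (V i) (V i)) +
        ∑ i, ∑ j ∈ univ.filter (i < ·),
          (((f (a i) - f (a j)) / ((a i) ^ 2 - (a j) ^ 2)) * (V i ⬝ᵥ A *ᵥ V j)) •
            (vecMulVec (V i) (V j) + vecMulVec (V j) (V i)) := by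
  rw [projOp, smul_add, smul_sum, smul_sum]
  congr 1
  · refine sum_congr rfl fun i _ => ?_
    rw [smul_smul]
    congr 1
    ring
  · refine sum_congr rfl fun i _ => ?_
    rw [smul_sum]
    refine sum_congr rfl fun j _ => ?_
    rw [smul_smul]
    congr 1
    ring

/-- Under the eigen-decomposition hypotheses with pairwise distinct
squared stretches at `t₀` and a differentiable scale function `E`: (i) the squared
stretches satisfy `(λ_a²)' = ⟨N_a, C' N_a⟩`; (ii) the generalized strain curve
`𝐄(t) = Σ_a E(λ_a(t)) N_a(t) N_a(t)ᵀ` has derivative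
`Σ_a (E'(λ_a)/(2λ_a)) ⟨N_a, C' N_a⟩ M_a + Σ_{a<b} [(E(λ_a)−E(λ_b))/(λ_a²−λ_b²)]
⟨N_a, C' N_b⟩ (N_a N_bᵀ + N_b N_aᵀ)`, which equals `½ 𝕼(C')`. -/
theorem generalized_strain_derivative
    (C : ℝ → Matrix (Fin 3) (Fin 3) ℝ) (C' : Matrix (Fin 3) (Fin 3) ℝ)
    (lam : Fin 3 → ℝ → ℝ) (lam' : Fin 3 → ℝ)
    (N : Fin 3 → ℝ → (Fin 3 → ℝ)) (N' : Fin 3 → (Fin 3 → ℝ)) (t₀ : ℝ)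
    (hCsym : ∀ t, (C t).IsSymm)
    (hC : HasDerivAt C C' t₀)
    (hlam : ∀ a, HasDerivAt (lam a) (lam' a) t₀)
    (hlampos : ∀ a t, 0 < lam a t)
    (hN : ∀ a, HasDerivAt (N a) (N' a) t₀)
    (heig : ∀ a, ∀ᶠ t in nhds t₀, (C t) *ᵥ (N a t) = ((lam a t) ^ 2) • N a t)
    (hON : ∀ a b, ∀ᶠ t in nhds t₀, N a t ⬝ᵥ N b t = if a = b then (1 : ℝ) else 0)
    (hdist : ∀ a b, a ≠ b → (lam a t₀) ^ 2 ≠ (lam b t₀) ^ 2)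
    (E E' : ℝ → ℝ)
    (hE : ∀ x : ℝ, 0 < x → HasDerivAt E (E' x) x) :
    (∀ a, HasDerivAt (fun t => (lam a t) ^ 2) (N a t₀ ⬝ᵥ (C' *ᵥ N a t₀)) t₀) ∧
    (HasDerivAt (fun t => ∑ a, E (lam a t) • vecMulVec (N a t) (N a t))
      ((∑ a, ((E' (lam a t₀) / (2 * lam a t₀)) * (N a t₀ ⬝ᵥ (C' *ᵥ N a t₀))) •
          vecMulVec (N a t₀) (N a t₀)) +
        ∑ a, ∑ b ∈ univ.filter (fun b => a < b),
          (((E (lam a t₀) - E (lam b t₀)) / ((lam a t₀) ^ 2 - (lam b t₀) ^ 2)) *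
              (N a t₀ ⬝ᵥ (C' *ᵥ N b t₀))) •
            (vecMulVec (N a t₀) (N b t₀) + vecMulVec (N b t₀) (N a t₀))) t₀) ∧
    ((∑ a, ((E' (lam a t₀) / (2 * lam a t₀)) * (N a t₀ ⬝ᵥ (C' *ᵥ N a t₀))) •
          vecMulVec (N a t₀) (N a t₀)) +
        ∑ a, ∑ b ∈ univ.filter (fun b => a < b),
          (((E (lam a t₀) - E (lam b t₀)) / ((lam a t₀) ^ 2 - (lam b t₀) ^ 2)) *
              (N a t₀ ⬝ᵥ (C' *ᵥ N b t₀))) •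
            (vecMulVec (N a t₀) (N b t₀) + vecMulVec (N b t₀) (N a t₀))
      = (1 / 2 : ℝ) • projOp (fun a => lam a t₀) (fun a => N a t₀) E E' C') := by
  have hsq : ∀ a, HasDerivAt (fun t => lam a t ^ 2) (2 * lam a t₀ * lam' a) t₀ := fun a => by
    simpa [mul_comm] using (hlam a).fun_pow 2
  have hdiag : ∀ a, 2 * lam a t₀ * lam' a = N a t₀ ⬝ᵥ C' *ᵥ N a t₀ := fun a =>
    eigenvalue_deriv_eq_dotProduct_mulVec (hCsym t₀) hC (hsq a) (hN a) (heig a)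
      (by simpa using (hON a a).self_of_nhds)
  have hoff : ∀ a b, a ≠ b →
      N a t₀ ⬝ᵥ C' *ᵥ N b t₀ = (lam a t₀ ^ 2 - lam b t₀ ^ 2) * (N b t₀ ⬝ᵥ N' a) :=
    fun a b hab => dotProduct_mulVec_deriv_eq_of_orthogonal (hCsym t₀) hC (hsq b) (hN a) (hN b)
      (heig a).self_of_nhds (heig b) ((hON a b).mono fun _ h => h.trans (if_neg hab))
  refine ⟨fun a => hdiag a ▸ hsq a, ?_, (half_smul_projOp _ _ _ _ _).symm⟩
  refine (hasDerivAt_sum_smul_vecMulVec_of_orthonormal (e := fun a t => E (lam a t))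
    (fun a => (hE _ (hlampos a t₀)).comp t₀ (hlam a)) hN hON).congr_deriv ?_
  congr 1
  · refine sum_congr rfl fun a _ => ?_
    rw [← hdiag]
    field_simp [(hlampos a t₀).ne']
  · refine sum_congr rfl fun a _ => sum_congr rfl fun b hb => ?_
    have hab : a ≠ b := (mem_filter.mp hb).2.ne
    rw [hoff a b hab]
    congr 1
    field_simp [sub_ne_zero.mpr (hdist a b hab)]
end

section
/- Let m, n > 0 be real and define the Darijani–Naghdabadi exponential scale function E : (0,∞) → ℝ by E(λ) := (e^{m(λ−1)} − e^{n(λ^{−1}−1)})/(m + n). Then: (i) E(1) = 0; (ii) E'(1) = 1; (iii) E'(λ) > 0 for all λ > 0; (iv) E(λ) → +∞ as λ → ∞ and E(λ) → −∞ as λ → 0⁺ (coercivity). -/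
open Filter Topology

/-! The derivative `(m e^{m(λ-1)} + n λ⁻² e^{n(λ⁻¹-1)})/(m+n)` is a positive combination of
exponentials. At each end of `(0, ∞)` one of the two exponentials blows up while the other
stays bounded, which gives coercivity. -/

/-- The Darijani–Naghdabadi exponential scale function. -/
noncomputable def DNscale (m n : ℝ) (x : ℝ) : ℝ :=
  (Real.exp (m * (x - 1)) - Real.exp (n * (x⁻¹ - 1))) / (m + n)

namespace DNscale

variable {m n : ℝ}

lemma apply_one (m n : ℝ) : DNscale m n 1 = 0 := by
  simp [DNscale]

lemma hasDerivAt (m n : ℝ) {x : ℝ} (hx : x ≠ 0) :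
    HasDerivAt (DNscale m n)
      ((m * Real.exp (m * (x - 1)) + n * (x ^ 2)⁻¹ * Real.exp (n * (x⁻¹ - 1))) / (m + n)) x := by
  have hlin : HasDerivAt (fun x : ℝ => m * (x - 1)) m x := by
    simpa using ((hasDerivAt_id x).sub_const 1).const_mul m
  have hinv : HasDerivAt (fun x : ℝ => n * (x⁻¹ - 1)) (n * -(x ^ 2)⁻¹) x :=
    ((hasDerivAt_inv hx).sub_const 1).const_mul n
  refine ((hlin.exp.sub hinv.exp).div_const (m + n)).congr_deriv ?_
  ring

lemma deriv_one (hmn : m + n ≠ 0) : deriv (DNscale m n) 1 = 1 := by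
  rw [(hasDerivAt m n one_ne_zero).deriv]
  simpa using div_self hmn

lemma deriv_pos (hm : 0 < m) (hn : 0 < n) {x : ℝ} (hx : 0 < x) :
    0 < deriv (DNscale m n) x := by
  rw [(hasDerivAt m n hx.ne').deriv]
  positivity

lemma tendsto_atTop (hm : 0 < m) (hn : 0 < n) : Tendsto (DNscale m n) atTop atTop := by
  have hgrow : Tendsto (fun x : ℝ => Real.exp (m * (x - 1))) atTop atTop :=
    Real.tendsto_exp_atTop.comp <|
      (tendsto_atTop_add_const_right _ _ tendsto_id).const_mul_atTop hm
  have hbdd : Tendsto (fun x : ℝ => Real.exp (n * (x⁻¹ - 1))) atTop (𝓝 (Real.exp (n * (0 - 1)))) :=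
    (Real.continuous_exp.tendsto _).comp ((tendsto_inv_atTop_zero.sub_const 1).const_mul n)
  exact (hgrow.atTop_add hbdd.neg).atTop_div_const (add_pos hm hn)

lemma tendsto_nhdsGT_zero (hm : 0 < m) (hn : 0 < n) :
    Tendsto (DNscale m n) (𝓝[>] 0) atBot := by
  have hbdd : Tendsto (fun x : ℝ => Real.exp (m * (x - 1))) (𝓝[>] 0) (𝓝 (Real.exp (m * (0 - 1)))) :=
    (Real.continuous_exp.comp <| continuous_const.mul (continuous_sub_right 1)).tendsto 0
      |>.mono_left nhdsWithin_le_nhds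
  have hgrow : Tendsto (fun x : ℝ => Real.exp (n * (x⁻¹ - 1))) (𝓝[>] 0) atTop :=
    Real.tendsto_exp_atTop.comp <|
      (tendsto_atTop_add_const_right _ _ tendsto_inv_nhdsGT_zero).const_mul_atTop hn
  exact (hbdd.add_atBot (tendsto_neg_atTop_atBot.comp hgrow)).atBot_div_const (add_pos hm hn)

end DNscale

/-- For `m, n > 0`, the Darijani–Naghdabadi exponential scale function
vanishes at `1` with derivative `1` there, is differentiable with everywhere positive
derivative on `(0,∞)`, and is coercive. -/
theorem DNscale_properties (m n : ℝ) (hm : 0 < m) (hn : 0 < n) :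
    DNscale m n 1 = 0 ∧
    deriv (DNscale m n) 1 = 1 ∧
    (∀ x : ℝ, 0 < x → DifferentiableAt ℝ (DNscale m n) x) ∧
    (∀ x : ℝ, 0 < x → 0 < deriv (DNscale m n) x) ∧
    Tendsto (DNscale m n) atTop atTop ∧
    Tendsto (DNscale m n) (𝓝[>] (0 : ℝ)) atBot :=
  ⟨DNscale.apply_one m n, DNscale.deriv_one (add_pos hm hn).ne',
    fun _ hx => (DNscale.hasDerivAt m n hx.ne').differentiableAt,
    fun _ hx => DNscale.deriv_pos hm hn hx,
    DNscale.tendsto_atTop hm hn, DNscale.tendsto_nhdsGT_zero hm hn⟩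
end
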